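/- Let G = (V,E) be a finite simple graph with at least one edge, let SG be the set of 0/1 incidence vectors in R^E of edge subsets of G contained in a cut of G, and let c = max_{S subset of V} |\delta(S)| be the size of a maximum cut of G. Then the vanishing ideal I(SG) is TH_c-exact, i.e., TH_c(I(SG)) = conv(SG); in other words, the theta-rank of I(SG) is at most the size of the max-cut of G. -/

import Mathlib

open MvPolynomial

/-- `f` is `k`-sos mod `I`: there are polynomials `h_j` of total degree at most `k` with
`f - ∑ j, h_j ^ 2 ∈ I`. -/
def IsKSos {σ : Type*} (I : Ideal (MvPolynomial σ ℝ)) (k : ℕ) (f : MvPolynomial σ ℝ) :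
    Prop :=
  ∃ (t : ℕ) (h : Fin t → MvPolynomial σ ℝ),
    (∀ j, (h j).totalDegree ≤ k) ∧ f - ∑ j, h j ^ 2 ∈ I

/-- The `k`-th theta body of an ideal `I`: the set of points where every polynomial of
degree at most 1 that is `k`-sos mod `I` is nonnegative. -/
def thetaBody {σ : Type*} (I : Ideal (MvPolynomial σ ℝ)) (k : ℕ) : Set (σ → ℝ) :=
  {x | ∀ f : MvPolynomial σ ℝ, f.totalDegree ≤ 1 → IsKSos I k f → 0 ≤ eval x f}

/-- The set SG of 0/1 incidence vectors in `ℝ^E` of edge subsets of `G` that are contained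
in a cut of `G` (a cut being the set of edges with exactly one endpoint in some `S ⊆ V`). -/
def cutVectors {V : Type*} (G : SimpleGraph V) : Set (G.edgeSet → ℝ) :=
  {x | ∃ (F : Set G.edgeSet) (S : Set V),
    (∀ e ∈ F, ∀ a b : V, (e : Sym2 V) = s(a, b) →
      ((a ∈ S ∧ b ∉ S) ∨ (b ∈ S ∧ a ∉ S))) ∧
    x = F.indicator 1}

/-!
A polynomial of degree at most one is affine, so if it is nonnegative on a set it is nonnegative
on its convex hull; together with Hahn–Banach separation this reduces `TH_c`-exactness to showing
that every affine `f ≥ 0` on SG is `c`-sos modulo `I(SG)`. The points of SG are the incidence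
vectors of a down-closed family of edge sets, each of size at most `c`. On such a family, Möbius
inversion interpolates any function by a multilinear polynomial of degree at most `c`; taking `g`
to interpolate `√f`, the difference `f - g ^ 2` vanishes on SG.
-/

open Finset IncidenceAlgebra

section Moebius

variable {𝕜 α : Type*} [Ring 𝕜] [PartialOrder α] [LocallyFiniteOrder α] [LocallyFiniteOrderBot α]
  [DecidableEq α]

theorem sum_Iic_sum_Iic_mu_mul (τ : α → 𝕜) (x : α) :
    ∑ y ∈ Iic x, ∑ z ∈ Iic y, mu 𝕜 z y * τ z = τ x := by
  calc ∑ y ∈ Iic x, ∑ z ∈ Iic y, mu 𝕜 z y * τ z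
      = ∑ z ∈ Iic x, (∑ y ∈ Icc z x, mu 𝕜 z y) * τ z := by
        simp_rw [sum_mul]
        exact sum_comm' fun y z => by
          simp only [mem_Iic, mem_Icc]
          exact ⟨fun h => ⟨⟨h.2, h.1⟩, h.2.trans h.1⟩, fun h => ⟨h.1.2, h.1.1⟩⟩
    _ = τ x := by simp [sum_Icc_mu_right]

end Moebius

namespace MvPolynomial

variable {σ : Type*}

theorem eval_smul_add_smul_of_totalDegree_le_one {f : MvPolynomial σ ℝ} (hf : f.totalDegree ≤ 1)
    (x y : σ → ℝ) {a b : ℝ} (hab : a + b = 1) :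
    eval (a • x + b • y) f = a * eval x f + b * eval y f := by
  classical
  conv_lhs => rw [f.as_sum]
  conv_rhs => rw [f.as_sum]
  simp only [map_sum, mul_sum, ← sum_add_distrib]
  refine sum_congr rfl fun d hd => ?_
  have hd1 : (d.sum fun _ n => n) ≤ 1 := (le_totalDegree hd).trans hf
  rcases Nat.le_one_iff_eq_zero_or_eq_one.mp hd1 with hd0 | hd1
  · obtain rfl : d = 0 := (Finsupp.degree_eq_zero_iff d).mp hd0
    simp only [monomial_zero', eval_C]
    linear_combination (-(coeff 0 f)) * hab
  · obtain ⟨i, rfl⟩ := (Finsupp.sum_eq_one_iff d).mp hd1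
    simp only [eval_monomial, Finsupp.prod_single_index, pow_zero, pow_one, Pi.add_apply,
      Pi.smul_apply, smul_eq_mul]
    ring

theorem exists_totalDegree_le_one_eval_eq [Fintype σ] (L : (σ → ℝ) →ₗ[ℝ] ℝ) (u : ℝ) :
    ∃ p : MvPolynomial σ ℝ, p.totalDegree ≤ 1 ∧ ∀ y, eval y p = L y + u := by
  classical
  refine ⟨∑ i, C (L fun j => if i = j then 1 else 0) * X i + C u, ?_, fun y => ?_⟩
  · refine (totalDegree_add _ _).trans (max_le ?_ (by simp))
    refine (totalDegree_finsetSum _ _).trans (Finset.sup_le fun i _ => ?_)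
    exact (totalDegree_mul _ _).trans (by simp [totalDegree_X])
  · simp [L.pi_apply_eq_sum_univ y, mul_comm]

theorem eval_indicator_prod_X [DecidableEq σ] (F F' : Finset σ) :
    eval ((F' : Set σ).indicator 1) (∏ e ∈ F, X e : MvPolynomial σ ℝ) =
      if F ⊆ F' then 1 else 0 := by
  simp [Set.indicator_apply, prod_boole, subset_iff]

/-- The coefficients come from Möbius inversion on `𝓕`; lower-closedness of `𝓕` makes the value
at the incidence vector of `F` a sum over all subsets of `F`. -/
theorem exists_totalDegree_le_eval_indicator_eq {𝓕 : Set (Finset σ)} (hfin : 𝓕.Finite)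
    (hlower : IsLowerSet 𝓕) {k : ℕ} (hcard : ∀ F ∈ 𝓕, #F ≤ k) (τ : Finset σ → ℝ) :
    ∃ g : MvPolynomial σ ℝ, g.totalDegree ≤ k ∧
      ∀ F ∈ 𝓕, eval ((F : Set σ).indicator 1) g = τ F := by
  classical
  refine ⟨∑ F ∈ hfin.toFinset, C (∑ T ∈ Iic F, mu ℝ T F * τ T) * ∏ e ∈ F, X e, ?_, ?_⟩
  · refine (totalDegree_finsetSum _ _).trans (Finset.sup_le fun F hF => ?_)
    refine (totalDegree_mul _ _).trans ?_
    rw [totalDegree_C, zero_add]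
    refine (totalDegree_finsetProd _ _).trans ?_
    simpa [totalDegree_X] using hcard F (hfin.mem_toFinset.mp hF)
  · intro F' hF'
    have hIic : hfin.toFinset.filter (· ⊆ F') = Iic F' := by
      ext F
      simp only [mem_filter, Set.Finite.mem_toFinset, mem_Iic]
      exact ⟨And.right, fun h => ⟨hlower h hF', h⟩⟩
    simp only [map_sum, map_mul, eval_C, eval_indicator_prod_X, mul_ite, mul_one, mul_zero]
    rw [← sum_filter, hIic]
    exact sum_Iic_sum_Iic_mu_mul τ F'

end MvPolynomial

open MvPolynomial

section ThetaBody

variable {σ : Type*}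

theorem IsKSos.eval_nonneg {S : Set (σ → ℝ)} {k : ℕ} {f : MvPolynomial σ ℝ}
    (hf : IsKSos (vanishingIdeal ℝ S) k f) {s : σ → ℝ} (hs : s ∈ S) : 0 ≤ eval s f := by
  obtain ⟨t, h, -, hmem⟩ := hf
  have hs : eval s (f - ∑ j, h j ^ 2) = 0 := by
    simpa using mem_vanishingIdeal_iff.mp hmem s hs
  rw [map_sub, sub_eq_zero] at hs
  rw [hs, map_sum]
  exact sum_nonneg fun j _ => by rw [map_pow]; exact sq_nonneg _

theorem convexHull_subset_thetaBody (S : Set (σ → ℝ)) (k : ℕ) :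
    convexHull ℝ S ⊆ thetaBody (vanishingIdeal ℝ S) k := by
  intro x hx f hdeg hsos
  refine convexHull_min (t := {y | 0 ≤ eval y f}) (fun s hs => hsos.eval_nonneg hs)
    (fun y (hy : 0 ≤ eval y f) z (hz : 0 ≤ eval z f) a b ha hb hab => ?_) hx
  show 0 ≤ eval (a • y + b • z) f
  rw [eval_smul_add_smul_of_totalDegree_le_one hdeg y z hab]
  positivity

theorem thetaBody_subset_convexHull [Finite σ] {S : Set (σ → ℝ)} (hS : S.Finite) {k : ℕ}
    (hsos : ∀ f : MvPolynomial σ ℝ, f.totalDegree ≤ 1 → (∀ s ∈ S, 0 ≤ eval s f) →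
      IsKSos (vanishingIdeal ℝ S) k f) :
    thetaBody (vanishingIdeal ℝ S) k ⊆ convexHull ℝ S := by
  have := Fintype.ofFinite σ
  intro x hx
  by_contra hxS
  obtain ⟨L, u, hLx, hLS⟩ := geometric_hahn_banach_point_closed (convex_convexHull ℝ S)
    (hS.isClosed_convexHull ℝ) hxS
  obtain ⟨p, hpdeg, hp⟩ := exists_totalDegree_le_one_eval_eq L.toLinearMap (-u)
  simp only [ContinuousLinearMap.coe_coe] at hp
  have hpS : ∀ s ∈ S, 0 ≤ eval s p := fun s hs => by
    linarith [hp s, hLS s (subset_convexHull ℝ S hs)]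
  linarith [hp x, hx p hpdeg (hsos p hpdeg hpS)]

theorem isKSos_of_nonneg_on_indicators {𝓕 : Set (Finset σ)} (hfin : 𝓕.Finite)
    (hlower : IsLowerSet 𝓕) {k : ℕ} (hcard : ∀ F ∈ 𝓕, #F ≤ k) {f : MvPolynomial σ ℝ}
    (hf : ∀ F ∈ 𝓕, 0 ≤ eval ((F : Set σ).indicator 1) f) :
    IsKSos (vanishingIdeal ℝ ((fun F : Finset σ => (F : Set σ).indicator (1 : σ → ℝ)) '' 𝓕))
      k f := by
  obtain ⟨g, hg, hgF⟩ := exists_totalDegree_le_eval_indicator_eq hfin hlower hcard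
    fun F => √(eval ((F : Set σ).indicator 1) f)
  refine ⟨1, fun _ => g, fun _ => hg, mem_vanishingIdeal_iff.mpr ?_⟩
  rintro _ ⟨F, hF, rfl⟩
  simp [hgF F hF, Real.sq_sqrt (hf F hF)]

end ThetaBody

namespace SimpleGraph

variable {V : Type*} (G : SimpleGraph V)

def edgeCut (S : Set V) : Set (Sym2 V) :=
  {e ∈ G.edgeSet | ∃ a b : V, e = s(a, b) ∧ ((a ∈ S ∧ b ∉ S) ∨ (b ∈ S ∧ a ∉ S))}

def cutEdgeFinsets : Set (Finset G.edgeSet) :=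
  {F | ∃ S : Set V, ∀ e ∈ F, ∀ a b : V, (e : Sym2 V) = s(a, b) →
    ((a ∈ S ∧ b ∉ S) ∨ (b ∈ S ∧ a ∉ S))}

theorem isLowerSet_cutEdgeFinsets : IsLowerSet G.cutEdgeFinsets :=
  fun _ _ hle ⟨S, hS⟩ => ⟨S, fun e he => hS e (hle he)⟩

variable [Finite V]

theorem cutVectors_eq_image :
    cutVectors G = (fun F : Finset G.edgeSet => (F : Set G.edgeSet).indicator 1) ''
      G.cutEdgeFinsets := by
  ext x
  constructor
  · rintro ⟨F, S, hS, rfl⟩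
    exact ⟨F.toFinite.toFinset, ⟨S, fun e he => hS e (by simpa using he)⟩, by simp⟩
  · rintro ⟨F, ⟨S, hS⟩, rfl⟩
    exact ⟨F, S, hS, rfl⟩

theorem card_le_of_mem_cutEdgeFinsets {c : ℕ} (hc : ∀ S, (G.edgeCut S).ncard ≤ c)
    {F : Finset G.edgeSet} (hF : F ∈ G.cutEdgeFinsets) : #F ≤ c := by
  obtain ⟨S, hS⟩ := hF
  have hsub : Subtype.val '' (F : Set G.edgeSet) ⊆ G.edgeCut S := by
    rintro _ ⟨e, he, rfl⟩
    obtain ⟨a, b, hab⟩ : ∃ a b : V, (e : Sym2 V) = s(a, b) :=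
      Sym2.ind (fun a b => ⟨a, b, rfl⟩) (e : Sym2 V)
    exact ⟨e.2, a, b, hab, hS e he a b hab⟩
  calc #F = (F : Set G.edgeSet).ncard := (Set.ncard_coe_finset F).symm
    _ = (Subtype.val '' (F : Set G.edgeSet)).ncard :=
        (Set.ncard_image_of_injective _ Subtype.val_injective).symm
    _ ≤ (G.edgeCut S).ncard := Set.ncard_le_ncard hsub
    _ ≤ c := hc S

end SimpleGraph

theorem stmt_17_general {V : Type*} [Fintype V] (G : SimpleGraph V)
    (c : ℕ)
    (hc : IsGreatest
      {m : ℕ | ∃ S : Set V,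
        m = {e ∈ G.edgeSet | ∃ a b : V, e = s(a, b) ∧
          ((a ∈ S ∧ b ∉ S) ∨ (b ∈ S ∧ a ∉ S))}.ncard} c) :
    thetaBody (vanishingIdeal ℝ (cutVectors G)) c = convexHull ℝ (cutVectors G) := by
  have hfin : G.cutEdgeFinsets.Finite := Set.toFinite _
  have hcard : ∀ F ∈ G.cutEdgeFinsets, #F ≤ c :=
    fun F => G.card_le_of_mem_cutEdgeFinsets (fun S => hc.2 ⟨S, rfl⟩)
  rw [G.cutVectors_eq_image]
  refine subset_antisymm (thetaBody_subset_convexHull (hfin.image _) fun f _ hf => ?_)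
    (convexHull_subset_thetaBody _ _)
  exact isKSos_of_nonneg_on_indicators hfin G.isLowerSet_cutEdgeFinsets hcard
    fun F hF => hf _ ⟨F, hF, rfl⟩

/-- Let G = (V,E) be a finite simple graph with at least one edge, SG the
set of 0/1 incidence vectors of edge subsets contained in a cut of G, and c the size of a
maximum cut of G. Then I(SG) is TH_c-exact, i.e. TH_c(I(SG)) = conv(SG). -/
theorem stmt_17 {V : Type*} [Fintype V] (G : SimpleGraph V) (hE : G.edgeSet.Nonempty)
    (c : ℕ)
    (hc : IsGreatest
      {m : ℕ | ∃ S : Set V,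
        m = {e ∈ G.edgeSet | ∃ a b : V, e = s(a, b) ∧
          ((a ∈ S ∧ b ∉ S) ∨ (b ∈ S ∧ a ∉ S))}.ncard} c) :
    thetaBody (vanishingIdeal ℝ (cutVectors G)) c = convexHull ℝ (cutVectors G) :=
  stmt_17_general G c hc
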